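/- In the setting where all true probabilities are 1/2 and each contestant predicts 1/2 ± ε_j independently (independent across contestants and questions, independent of outcomes), the total scores of distinct contestants are independent random variables. -/

import Mathlib

open MeasureTheory ProbabilityTheory

private lemma bool_solve (a s c : Bool) : ((a == s) = c) ↔ (s = (a == c)) := by
  revert a s c; decide

private lemma map_T (n m : ℕ) :
    ((PMF.uniformOfFintype ((Fin n → Bool) × (Fin n → Fin m → Bool))).toMeasure).map
      (fun ω (j : Fin m) (i : Fin n) => (ω.1 i == ω.2 i j)) =
    Measure.pi (fun _ : Fin m => (PMF.uniformOfFintype (Fin n → Bool)).toMeasure) := by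
  apply Measure.ext_of_singleton
  intro v
  rw [Measure.map_apply (measurable_of_countable _) (measurableSet_singleton v)]
  have hpre : (fun ω (j : Fin m) (i : Fin n) => (ω.1 i == ω.2 i j)) ⁻¹' {v}
      = Set.range (fun b : Fin n → Bool => (b, fun i j => (b i == v j i))) := by
    ext ω
    simp only [Set.mem_preimage, Set.mem_singleton_iff, Set.mem_range, Prod.ext_iff,
      funext_iff]
    constructor
    · intro h
      exact ⟨ω.1, fun i => rfl, fun i j => ((bool_solve _ _ _).1 (h j i)).symm⟩
    · rintro ⟨b, hb1, hb2⟩ j i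
      rw [(bool_solve (ω.1 i) (ω.2 i j) (v j i))]
      rw [← hb2 i j, ← hb1 i]
  rw [hpre, PMF.toMeasure_uniformOfFintype_apply _ (Set.to_countable _).measurableSet]
  have hinj : Function.Injective (fun b : Fin n → Bool => (b, fun i j => (b i == v j i))) :=
    fun b b' h => congrArg Prod.fst h
  have hcard : Nat.card ↑(Set.range (fun b : Fin n → Bool =>
      ((b, fun i j => (b i == v j i)) : (Fin n → Bool) × (Fin n → Fin m → Bool)))) = 2 ^ n := by
    rw [Nat.card_range_of_injective hinj, Nat.card_eq_fintype_card]
    simp [Fintype.card_fun]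
  rw [← Set.univ_pi_singleton v, Measure.pi_pi]
  have hsing : ∀ j : Fin m,
      (PMF.uniformOfFintype (Fin n → Bool)).toMeasure {v j} = ((2 : ENNReal) ^ n)⁻¹ := by
    intro j
    rw [PMF.toMeasure_uniformOfFintype_apply _ (measurableSet_singleton _)]
    simp [Fintype.card_fun]
  simp only [hsing, Finset.prod_const, Finset.card_univ, Fintype.card_fin]
  simp only [Fintype.card_eq_nat_card]
  rw [hcard]
  have hΩ : Nat.card ((Fin n → Bool) × (Fin n → Fin m → Bool)) = 2 ^ n * (2 ^ m) ^ n := by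
    simp [Nat.card_eq_fintype_card, Fintype.card_fun]
  rw [hΩ]
  push_cast
  have hs : ((2 : ENNReal) ^ m) ^ n = ((2 : ENNReal) ^ n) ^ m := by
    rw [← pow_mul, ← pow_mul, Nat.mul_comm]
  rw [hs, ← ENNReal.inv_pow, div_eq_mul_inv,
    ENNReal.mul_inv (Or.inl (pow_ne_zero n two_ne_zero)) (Or.inl (ENNReal.pow_ne_top (by norm_num))),
    ← mul_assoc, ENNReal.mul_inv_cancel (pow_ne_zero n two_ne_zero) (ENNReal.pow_ne_top (by norm_num)),
    one_mul, ENNReal.inv_pow]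

/-- All true probabilities equal `1/2`; contestant `j` predicts `1/2 ± ε j` with independent
fair signs (independent across contestants and questions, and of the outcomes).  Under the
uniform probability measure on outcomes and signs, the total scores of the `m` contestants
are independent random variables. -/
theorem contestant_scores_independent (n m : ℕ) (ε : Fin m → ℝ) :
    let Ω := (Fin n → Bool) × (Fin n → Fin m → Bool)
    let μ : Measure Ω := (PMF.uniformOfFintype Ω).toMeasure
    let score : Fin m → Ω → ℝ := fun j ω =>
      ∑ i, ((if ω.1 i then (1:ℝ) else 0)
            - (1/2 + ε j * (if ω.2 i j then 1 else -1)))^2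
    iIndepFun score μ := by
  intro Ω μ score
  set ν : Measure (Fin n → Bool) := (PMF.uniformOfFintype (Fin n → Bool)).toMeasure with hν
  set T : Ω → (Fin m → Fin n → Bool) := fun ω j i => (ω.1 i == ω.2 i j) with hT
  set g : Fin m → (Fin n → Bool) → ℝ :=
    fun j v => ∑ i, (1/4 + (ε j)^2 - ε j * (if v i then 1 else -1)) with hg
  have hscore : ∀ j ω, score j ω = g j (T ω j) := by
    intro j ω
    refine Finset.sum_congr rfl fun i _ => ?_
    simp only [hT]
    cases h1 : ω.1 i <;> cases h2 : ω.2 i j <;> simp <;> ring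
  have key : ∀ (S : Finset (Fin m)) (A : Fin m → Set (Fin n → Bool)),
      μ (⋂ j ∈ S, (fun ω => T ω j) ⁻¹' A j) = ∏ j ∈ S, ν (A j) := by
    intro S A
    have h1 : (⋂ j ∈ S, (fun ω => T ω j) ⁻¹' A j)
        = T ⁻¹' (Set.univ.pi (fun j => if j ∈ S then A j else Set.univ)) := by
      ext ω
      simp only [Set.mem_iInter, Set.mem_preimage, Set.mem_pi, Set.mem_univ, true_implies]
      constructor
      · intro h j
        by_cases hj : j ∈ S <;> simp [hj, h]
      · intro h j hj
        have := h j
        simpa [hj] using this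
    rw [h1, ← Measure.map_apply (measurable_of_countable T)
      (Set.to_countable _).measurableSet]
    rw [show μ.map T = Measure.pi (fun _ : Fin m => ν) from map_T n m]
    rw [Measure.pi_pi]
    have : ∀ j : Fin m, ν (if j ∈ S then A j else Set.univ)
        = if j ∈ S then ν (A j) else 1 := by
      intro j; split <;> simp
    simp only [this]
    rw [Finset.prod_ite_mem, Finset.univ_inter]
  rw [iIndepFun_iff_measure_inter_preimage_eq_mul]
  intro S sets hsets
  have hpre : ∀ j, score j ⁻¹' sets j = (fun ω => T ω j) ⁻¹' (g j ⁻¹' sets j) := by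
    intro j; ext ω; simp [Set.mem_preimage, hscore]
  calc μ (⋂ j ∈ S, score j ⁻¹' sets j)
      = μ (⋂ j ∈ S, (fun ω => T ω j) ⁻¹' (g j ⁻¹' sets j)) := by
        congr 1; exact Set.iInter₂_congr fun j _ => hpre j
    _ = ∏ j ∈ S, ν (g j ⁻¹' sets j) := key S _
    _ = ∏ j ∈ S, μ (score j ⁻¹' sets j) := by
        refine Finset.prod_congr rfl fun j hj => ?_
        rw [hpre j]
        have := key {j} (fun _ => g j ⁻¹' sets j)
        simpa using this.symm
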